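/- With N = diag(1, ω, ω), right multiplication by N maps Λ_{j,k} onto Λ_{j+k,k} for all integers j, k, i.e. Λ_{j,k} N = Λ_{j+k,k}. -/

import Mathlib

/-!
Write `α ∈ Λ_{j,k}` as `a + k(1/λ,1/λ,1/λ)` with `a ∈ 𝒪³`. Multiplying a coordinate by `ω` moves
`k/λ` by `k(ω - 1)/λ = -kω² ∈ 𝒪`, and the coordinate sum gains `(ω - 1)(α₁ + α₂) ≡ k (mod λ)`,
so `αN ∈ Λ_{j+k,k}`. Conversely `N³ = 1` and `Λ_{j+3k,k} = Λ_{j,k}` because `3 = -λ²`, so for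
`β ∈ Λ_{j+k,k}` the vector `βN²` lies in `Λ_{j,k}` and is a preimage of `β`.
-/

noncomputable section
open Complex

/-- `ω = exp(2πi/3)`. -/
def ω : ℂ := Complex.exp (2 * Real.pi * Complex.I / 3)

/-- `λ = ω - ω² = √-3`. -/
def lam : ℂ := ω - ω ^ 2

/-- `x` is an Eisenstein integer, i.e. `x ∈ 𝒪 = ℤ[ω]`. -/
def isO (x : ℂ) : Prop := ∃ m n : ℤ, x = (m : ℂ) + (n : ℂ) * ω

/-- `Λ_{j,k} = {α ∈ 𝒪³ + k(1/λ,1/λ,1/λ) : α₀+α₁+α₂ ≡ j (mod λ𝒪)}`. -/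
def LamSet (j k : ℤ) : Set (Fin 3 → ℂ) :=
  {α | (∀ i, isO (α i - k / lam)) ∧ isO ((α 0 + α 1 + α 2 - j) / lam)}

/-- The matrix `N = diag(1, ω, ω)`. -/
def N : Matrix (Fin 3) (Fin 3) ℂ := Matrix.diagonal ![1, ω, ω]

open Matrix

lemma isPrimitiveRoot_ω : IsPrimitiveRoot ω 3 := by
  simpa [ω] using Complex.isPrimitiveRoot_exp 3 (by norm_num)

lemma ω_sq_add_ω_add_one : ω ^ 2 + ω + 1 = 0 := by
  have h := isPrimitiveRoot_ω.geom_sum_eq_zero (by norm_num)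
  simp only [Finset.sum_range_succ, Finset.sum_range_zero] at h
  linear_combination h

lemma lam_sq : lam ^ 2 = -3 := by
  unfold lam
  linear_combination (ω - 2) * isPrimitiveRoot_ω.pow_eq_one + ω_sq_add_ω_add_one

lemma lam_ne_zero : lam ≠ 0 := by
  intro h
  simpa [h] using lam_sq

def eisensteinSubring : Subring ℂ where
  carrier := {x | isO x}
  mul_mem' := by
    rintro _ _ ⟨m, n, rfl⟩ ⟨p, q, rfl⟩
    exact ⟨m * p - n * q, m * q + n * p - n * q, by
      push_cast; linear_combination (n * q : ℂ) * ω_sq_add_ω_add_one⟩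
  one_mem' := ⟨1, 0, by simp⟩
  add_mem' := by
    rintro _ _ ⟨m, n, rfl⟩ ⟨p, q, rfl⟩
    exact ⟨m + p, n + q, by push_cast; ring⟩
  zero_mem' := ⟨0, 0, by simp⟩
  neg_mem' := by
    rintro _ ⟨m, n, rfl⟩
    exact ⟨-m, -n, by push_cast; ring⟩

local notation "𝒪" => eisensteinSubring

lemma ω_mem : ω ∈ 𝒪 := ⟨0, 1, by simp⟩

lemma lam_mem : lam ∈ 𝒪 := sub_mem ω_mem (pow_mem ω_mem 2)

lemma mem_LamSet {j k : ℤ} {α : Fin 3 → ℂ} :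
    α ∈ LamSet j k ↔ (∀ i, α i - k / lam ∈ 𝒪) ∧ (α 0 + α 1 + α 2 - j) / lam ∈ 𝒪 :=
  Iff.rfl

lemma mul_ω_sub_div_lam (x c : ℂ) : x * ω - c / lam = ω * (x - c / lam) - c * ω ^ 2 := by
  field_simp [lam_ne_zero]
  unfold lam
  linear_combination (c - ω * c) * isPrimitiveRoot_ω.pow_eq_one

lemma sum_mul_ω_sub_div_lam (a₀ a₁ a₂ j k : ℂ) :
    (a₀ + a₁ * ω + a₂ * ω - (j + k)) / lam
      = (a₀ + a₁ + a₂ - j) / lam - ω ^ 2 * ((a₁ - k / lam) + (a₂ - k / lam)) + k := by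
  field_simp [lam_ne_zero]
  unfold lam
  linear_combination (a₁ + a₂) * (1 - ω) * isPrimitiveRoot_ω.pow_eq_one - k * ω_sq_add_ω_add_one

lemma LamSet_add_three_mul (j k m : ℤ) : LamSet (j + 3 * m) k = LamSet j k := by
  have hshift (s : ℂ) : (s - ((j + 3 * m : ℤ) : ℂ)) / lam = (s - j) / lam + m * lam := by
    field_simp [lam_ne_zero]
    push_cast
    linear_combination (-m : ℂ) * lam_sq
  ext α
  simp only [mem_LamSet, hshift, add_mem_cancel_right (mul_mem (intCast_mem _ m) lam_mem)]

lemma vecMul_N (α : Fin 3 → ℂ) : vecMul α N = ![α 0, α 1 * ω, α 2 * ω] := by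
  ext i
  fin_cases i <;> simp [N, vecMul_diagonal]

lemma N_pow_three : N ^ 3 = 1 := by
  rw [N, diagonal_pow, ← diagonal_one]
  congr 1
  ext i
  fin_cases i <;> simp [isPrimitiveRoot_ω.pow_eq_one]

lemma vecMul_N_mem_LamSet {j k : ℤ} {α : Fin 3 → ℂ} (hα : α ∈ LamSet j k) :
    vecMul α N ∈ LamSet (j + k) k := by
  obtain ⟨hcoord, hsum⟩ := mem_LamSet.1 hα
  have hrot (i : Fin 3) : α i * ω - k / lam ∈ 𝒪 := by
    rw [mul_ω_sub_div_lam]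
    exact sub_mem (mul_mem ω_mem (hcoord i)) (mul_mem (intCast_mem _ k) (pow_mem ω_mem 2))
  refine mem_LamSet.2 ⟨Fin.forall_fin_succ.2 ⟨?_, Fin.forall_fin_two.2 ⟨?_, ?_⟩⟩, ?_⟩
  · simpa [vecMul_N] using hcoord 0
  · simpa [vecMul_N] using hrot 1
  · simpa [vecMul_N] using hrot 2
  · simp only [vecMul_N, cons_val_zero, cons_val_one, cons_val, Int.cast_add]
    rw [sum_mul_ω_sub_div_lam]
    exact add_mem (sub_mem hsum (mul_mem (pow_mem ω_mem 2)
      (add_mem (hcoord 1) (hcoord 2)))) (intCast_mem _ k)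

/-- Right multiplication by `N` maps `Λ_{j,k}` onto `Λ_{j+k,k}`. -/
theorem LamSet_mul_N (j k : ℤ) :
    (fun α => Matrix.vecMul α N) '' LamSet j k = LamSet (j + k) k := by
  refine (Set.image_subset_iff.2 fun α => vecMul_N_mem_LamSet).antisymm fun β hβ => ?_
  have hβN2 : vecMul (vecMul β N) N ∈ LamSet j k := by
    rw [← LamSet_add_three_mul j k k, show j + 3 * k = j + k + k + k by ring]
    exact vecMul_N_mem_LamSet (vecMul_N_mem_LamSet hβ)
  refine ⟨_, hβN2, ?_⟩
  simp only [vecMul_vecMul, ← pow_three', N_pow_three, vecMul_one]
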